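/- arXiv:1103.0996 — 2 statements merged into one kernel-verified Lean document; each statement's English description precedes it below -/
import Mathlib

section
/- In the setting of the independence lemma, the joint distribution of Y = A_I and Z = A_J factors: for y ∈ 𝒜′ and z ∈ 𝒜, p(y,z) = (n·p_A(y)·p_A(z)/c) · Σ_{a₃ⁿ ∈ 𝒜^{n−2}} ∏_{l=3}^{n} p_A(a_l) / (1 + 1_{𝒜′}(z) + Σ_{k=3}^{n} 1_{𝒜′}(a_k)), where the second factor depends only on z (and not on y); and p(y,z) = 0 for y ∉ 𝒜′. -/
open Finset Real

noncomputable section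

variable {Ω : Type*} [Fintype Ω]

/-- `μ` is a probability mass function on the finite sample space `Ω`. -/
def IsPMF (μ : Ω → ℝ) : Prop := (∀ ω, 0 ≤ μ ω) ∧ ∑ ω, μ ω = 1

/-- Probability that the random variable `X` takes the value `a`. -/
def pr {α : Type*} [DecidableEq α] (μ : Ω → ℝ) (X : Ω → α) (a : α) : ℝ :=
  ∑ ω, if X ω = a then μ ω else 0

/-- Shannon entropy (in bits). -/
def ent {α : Type*} [Fintype α] [DecidableEq α] (μ : Ω → ℝ) (X : Ω → α) : ℝ :=
  -∑ a, pr μ X a * Real.logb 2 (pr μ X a)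

/-- Conditional entropy `H(X|Y)`. -/
def condEnt {α β : Type*} [Fintype α] [DecidableEq α] [Fintype β] [DecidableEq β]
    (μ : Ω → ℝ) (X : Ω → α) (Y : Ω → β) : ℝ :=
  ent μ (fun ω => (X ω, Y ω)) - ent μ Y

/-- Mutual information `I(X;Y)`. -/
def mutInf {α β : Type*} [Fintype α] [DecidableEq α] [Fintype β] [DecidableEq β]
    (μ : Ω → ℝ) (X : Ω → α) (Y : Ω → β) : ℝ :=
  ent μ X + ent μ Y - ent μ (fun ω => (X ω, Y ω))

/-- Conditional mutual information `I(X;Y|Z)`. -/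
def condMutInf {α β γ : Type*} [Fintype α] [DecidableEq α] [Fintype β] [DecidableEq β]
    [Fintype γ] [DecidableEq γ] (μ : Ω → ℝ) (X : Ω → α) (Y : Ω → β) (Z : Ω → γ) : ℝ :=
  condEnt μ X Z + condEnt μ Y Z - condEnt μ (fun ω => (X ω, Y ω)) Z

/-!
When `a i ∈ A'`, the mass `μ (a, i)` is a weight of the sequence `a` alone, and that weight is
invariant under cyclic rotations of `a`. Rotating by `i` moves the adjacent pair `(a i, a (i + 1))`
to `(a 0, a 1)`, so each of the `n` positions contributes the same amount; fixing `a 0 = y`,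
`a 1 = z` and summing out the remaining `n - 2` coordinates gives the formula.
-/

namespace Fin

variable {α : Type*} [Fintype α]

theorem sum_fun_cons {M : Type*} [AddCommMonoid M] {m : ℕ} (f : (Fin (m + 1) → α) → M) :
    ∑ a, f a = ∑ u, ∑ b : Fin m → α, f (Fin.cons u b) := by
  rw [← (Fin.consEquiv fun _ => α).sum_comp, Fintype.sum_prod_type]
  rfl

theorem sum_comp_addRight {M : Type*} [AddCommMonoid M] {N : ℕ} [NeZero N] (i : Fin N)
    (f : (Fin N → α) → M) : ∑ a : Fin N → α, f (fun k => a (k + i)) = ∑ a, f a :=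
  ((Equiv.addRight i).symm.arrowCongr (Equiv.refl α)).sum_comp f

theorem mk_mod_eq_add_one {N : ℕ} [NeZero N] (i : Fin N) (h : (i.val + 1) % N < N) :
    (⟨(i.val + 1) % N, h⟩ : Fin N) = i + 1 := by
  ext
  simp [Fin.val_add]

end Fin

section HitWeight

variable {α : Type*} [DecidableEq α] (pA : α → ℝ) (A' : Finset α) (c : ℝ)

def hitWeight {N : ℕ} (a : Fin N → α) : ℝ :=
  (∏ l, pA (a l)) / (c * ∑ k, if a k ∈ A' then 1 else 0)

theorem hitWeight_comp_addRight {N : ℕ} [NeZero N] (a : Fin N → α) (i : Fin N) :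
    hitWeight pA A' c (fun k => a (k + i)) = hitWeight pA A' c a := by
  have hprod : ∏ l, pA (a (l + i)) = ∏ l, pA (a l) :=
    Equiv.prod_comp (Equiv.addRight i) fun k => pA (a k)
  have hcount : ∑ k, (if a (k + i) ∈ A' then 1 else 0 : ℝ) = ∑ k, if a k ∈ A' then 1 else 0 :=
    Equiv.sum_comp (Equiv.addRight i) fun k => if a k ∈ A' then (1 : ℝ) else 0
  rw [hitWeight, hitWeight, hprod, hcount]

variable [Fintype α]

theorem sum_adjacent_hitWeight_eq {N : ℕ} [NeZero N] (i : Fin N) (y z : α) :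
    ∑ a : Fin N → α, (if a i = y ∧ a (i + 1) = z then hitWeight pA A' c a else 0)
      = ∑ a : Fin N → α, if a 0 = y ∧ a 1 = z then hitWeight pA A' c a else 0 := by
  rw [← Fin.sum_comp_addRight i
    fun a : Fin N → α => if a 0 = y ∧ a 1 = z then hitWeight pA A' c a else 0]
  simp only [zero_add, add_comm 1 i, hitWeight_comp_addRight]

theorem sum_hitWeight_cons_cons {m : ℕ} {y : α} (hy : y ∈ A') (z : α) :
    ∑ a : Fin (m + 2) → α, (if a 0 = y ∧ a 1 = z then hitWeight pA A' c a else 0)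
      = pA y * pA z / c * ∑ b : Fin m → α, (∏ l, pA (b l)) /
          (1 + (if z ∈ A' then (1 : ℝ) else 0) + ∑ k, (if b k ∈ A' then (1 : ℝ) else 0)) := by
  rw [Fin.sum_fun_cons]
  simp_rw [Fin.sum_fun_cons (m := m), Fin.cons_zero, Fin.cons_one]
  rw [Fintype.sum_eq_single y fun u hu => by simp [hu],
    Fintype.sum_eq_single z fun v hv => by simp [hv], mul_sum]
  refine sum_congr rfl fun b _ => ?_
  simp only [and_self, if_true, hitWeight, Fin.prod_univ_succ, Fin.sum_univ_succ, Fin.cons_zero,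
    Fin.cons_succ, hy]
  rw [div_mul_div_comm, add_assoc]
  ring

theorem pr_adjacent_eq_sum {N : ℕ} [NeZero N] (μ : (Fin N → α) × Fin N → ℝ)
    (hμ : ∀ p, μ p = if p.1 p.2 ∈ A' then hitWeight pA A' c p.1 else 0) {y : α} (hy : y ∈ A')
    (z : α) :
    pr μ (fun p => (p.1 p.2, p.1 (p.2 + 1))) (y, z)
      = ∑ i, ∑ a : Fin N → α, if a i = y ∧ a (i + 1) = z then hitWeight pA A' c a else 0 := by
  rw [pr, Fintype.sum_prod_type, sum_comm]
  refine sum_congr rfl fun i _ => sum_congr rfl fun a _ => ?_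
  by_cases h : a i = y ∧ a (i + 1) = z
  · simp [h, hμ, hy]
  · simp [h]

end HitWeight

/-- in the setting of the independence lemma with `s = 1`, the joint distribution of
`Y = A_I` and `Z = A_J` factors: `p(y,z) = 0` for `y ∉ 𝒜′`, and for `y ∈ 𝒜′`,
`p(y,z) = (n·p_A(y)·p_A(z)/c) · Σ_{a₃ⁿ} ∏_{l≥3} p_A(a_l) / (1 + 1_{𝒜′}(z) + Σ_{k≥3} 1_{𝒜′}(a_k))`,
where the sum depends only on `z`. -/
theorem stmt5 {α : Type*} [Fintype α] [DecidableEq α]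
    (pA : α → ℝ)
    (A' : Finset α)
    (n : ℕ) (hn : 2 ≤ n)
    (c : ℝ)
    (μ : (Fin n → α) × Fin n → ℝ)
    (hμ : ∀ p : (Fin n → α) × Fin n,
      μ p = if p.1 p.2 ∈ A'
        then (∏ l, pA (p.1 l)) / (c * ((Finset.univ.filter (fun k => p.1 k ∈ A')).card : ℝ))
        else 0)
    (J : (Fin n → α) × Fin n → Fin n)
    (hJ : ∀ p : (Fin n → α) × Fin n, J p = ⟨(p.2.val + 1) % n, Nat.mod_lt _ (by omega)⟩) :
    (∀ y z : α, y ∉ A' → pr μ (fun p => (p.1 p.2, p.1 (J p))) (y, z) = 0)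
    ∧ ∀ y ∈ A', ∀ z : α,
        pr μ (fun p => (p.1 p.2, p.1 (J p))) (y, z)
          = (n * pA y * pA z / c) *
              ∑ b : Fin (n - 2) → α,
                (∏ l, pA (b l)) /
                  (1 + (if z ∈ A' then (1 : ℝ) else 0)
                    + ∑ k, (if b k ∈ A' then (1 : ℝ) else 0)) := by
  obtain ⟨m, rfl⟩ := Nat.exists_eq_add_of_le' hn
  have hμ' : ∀ p, μ p = if p.1 p.2 ∈ A' then hitWeight pA A' c p.1 else 0 := fun p => by
    rw [hμ, hitWeight, natCast_card_filter]
  have hJ' : (fun p : (Fin (m + 2) → α) × Fin (m + 2) => (p.1 p.2, p.1 (J p)))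
      = fun p => (p.1 p.2, p.1 (p.2 + 1)) := by
    funext p
    rw [hJ, Fin.mk_mod_eq_add_one]
  refine ⟨fun y z hy => sum_eq_zero fun p _ => ?_, fun y hy z => ?_⟩
  · split_ifs with h
    · obtain ⟨rfl, -⟩ := Prod.mk.inj h
      rw [hμ, if_neg hy]
    · rfl
  · rw [hJ', pr_adjacent_eq_sum pA A' c μ hμ' hy,
      sum_congr rfl fun i _ => sum_adjacent_hitWeight_eq pA A' c i y z, sum_const, card_univ,
      Fintype.card_fin, nsmul_eq_mul, sum_hitWeight_cons_cons pA A' c hy, Nat.add_sub_cancel]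
    push_cast
    ring
end
end

section
/- Let M be uniform on a set of size 2^{nR₀}, let a codebook 𝒞 be a random variable, and let U^n be a deterministic function of (𝒞, M). Suppose X^n and Z^n are jointly distributed with (𝒞, M, U^n) such that the channel from X to Z is memoryless: H(Zⁿ|Xⁿ, 𝒞) = n·H(Z|X) for a single-letter pair (X,Z), H(Zⁿ|Uⁿ) ≤ n·H(Z|U), and H(Zⁿ|Xⁿ,Uⁿ) = n·H(Z|X,U) with H(Z|X)=H(Z|X,U). Then I(Xⁿ;Zⁿ|𝒞) ≤ nR₀ + n·I(X;Z|U). -/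
/-!
Write `I(Xⁿ;Zⁿ|𝒞) = H(Zⁿ|𝒞) − H(Zⁿ|Xⁿ,𝒞)`. Revealing the message can only increase the
uncertainty, so `H(Zⁿ|𝒞) ≤ H(M|𝒞) + H(Zⁿ|M,𝒞) ≤ H(M) + H(Zⁿ|Uⁿ)`, the last step because
conditioning reduces entropy and `Uⁿ` is a function of `(𝒞, M)`. The hypotheses turn this into
`nR₀ + nH(Z|U) − nH(Z|X,U)`. That conditioning reduces entropy is the nonnegativity of
conditional mutual information, which is Gibbs' inequality for `p(x,y,z)` against
`p(x,z) p(y,z) / p(z)`.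
-/

open Finset Real

noncomputable section

variable {Ω : Type*} [Fintype Ω]

section InformationInequalities

variable {α β γ τ : Type*} [DecidableEq α] [DecidableEq β] [DecidableEq γ]

theorem sum_pr_mul [Fintype α] (μ : Ω → ℝ) (X : Ω → α) (F : α → ℝ) :
    ∑ a, pr μ X a * F a = ∑ ω, μ ω * F (X ω) := by
  simp only [pr, sum_mul, ite_mul, zero_mul]
  rw [sum_comm]
  exact sum_congr rfl fun ω _ => by simp

theorem sum_pr [Fintype α] (μ : Ω → ℝ) (X : Ω → α) : ∑ a, pr μ X a = ∑ ω, μ ω := by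
  simpa using sum_pr_mul μ X fun _ => 1

theorem sum_pr_pair_fst [Fintype α] (μ : Ω → ℝ) (X : Ω → α) (Y : Ω → β) (b : β) :
    ∑ a, pr μ (fun ω => (X ω, Y ω)) (a, b) = pr μ Y b := by
  simp only [pr, Prod.ext_iff]
  rw [sum_comm]
  refine sum_congr rfl fun ω _ => ?_
  by_cases h : Y ω = b <;> simp [h]

theorem pr_nonneg {μ : Ω → ℝ} (hμ : ∀ ω, 0 ≤ μ ω) (X : Ω → α) (a : α) : 0 ≤ pr μ X a :=
  sum_nonneg fun ω _ => by split <;> simp [hμ ω]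

theorem pr_le_pr_of_imp {μ : Ω → ℝ} (hμ : ∀ ω, 0 ≤ μ ω) {X : Ω → α} {Y : Ω → β} {a : α}
    {b : β} (h : ∀ ω, X ω = a → Y ω = b) : pr μ X a ≤ pr μ Y b :=
  sum_le_sum fun ω _ => by
    by_cases hX : X ω = a
    · simp [hX, h ω hX]
    · simpa [hX] using ite_nonneg (hμ ω) le_rfl

theorem le_pr_apply {μ : Ω → ℝ} (hμ : ∀ ω, 0 ≤ μ ω) (X : Ω → α) (ω : Ω) :
    μ ω ≤ pr μ X (X ω) := by
  unfold pr
  simpa using single_le_sum (f := fun ω' => if X ω' = X ω then μ ω' else 0)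
    (fun ω' _ => by split <;> simp [hμ ω']) (mem_univ ω)

theorem ent_eq_neg_sum [Fintype α] (μ : Ω → ℝ) (X : Ω → α) :
    ent μ X = -∑ ω, μ ω * logb 2 (pr μ X (X ω)) := by
  rw [ent, sum_pr_mul μ X fun a => logb 2 (pr μ X a)]

theorem ent_comp_eq_neg_sum [Fintype α] [Fintype β] (μ : Ω → ℝ) (X : Ω → α) (g : α → β) :
    ent μ (fun ω => g (X ω)) = -∑ a, pr μ X a * logb 2 (pr μ (fun ω => g (X ω)) (g a)) := by
  rw [ent_eq_neg_sum, sum_pr_mul μ X fun a => logb 2 (pr μ (fun ω => g (X ω)) (g a))]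

theorem ent_comp_le [Fintype α] [Fintype β] {μ : Ω → ℝ} (hμ : ∀ ω, 0 ≤ μ ω) (X : Ω → α)
    (g : α → β) : ent μ (fun ω => g (X ω)) ≤ ent μ X := by
  rw [ent_eq_neg_sum, ent_eq_neg_sum, neg_le_neg_iff]
  refine sum_le_sum fun ω _ => ?_
  rcases (hμ ω).eq_or_lt with h | h
  · simp [← h]
  · refine mul_le_mul_of_nonneg_left (logb_le_logb_of_le one_lt_two ?_ ?_) h.le
    · exact h.trans_le (le_pr_apply hμ X ω)
    · exact pr_le_pr_of_imp hμ fun ω' h' => by rw [h']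

theorem ent_comp_of_leftInverse [Fintype α] [Fintype β] {μ : Ω → ℝ} (hμ : ∀ ω, 0 ≤ μ ω)
    (X : Ω → α) (g : α → β) (g' : β → α) (h : Function.LeftInverse g' g) :
    ent μ (fun ω => g (X ω)) = ent μ X :=
  (ent_comp_le hμ X g).antisymm <| by
    simpa only [h _] using ent_comp_le hμ (fun ω => g (X ω)) g'

theorem sum_mul_logb_le_sum_mul_logb [Fintype τ] {p q : τ → ℝ} (hp : ∀ t, 0 ≤ p t)
    (hq : ∀ t, 0 ≤ q t) (hpq : ∀ t, 0 < p t → 0 < q t) (hsum : ∑ t, q t ≤ ∑ t, p t) :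
    ∑ t, p t * logb 2 (q t) ≤ ∑ t, p t * logb 2 (p t) := by
  have key : ∀ t, p t * log (q t) ≤ p t * log (p t) + (q t - p t) := by
    intro t
    rcases (hp t).eq_or_lt with h | h
    · simp [← h, hq t]
    · have hlog := log_le_sub_one_of_pos (div_pos (hpq t h) h)
      rw [log_div (hpq t h).ne' h.ne'] at hlog
      have := mul_le_mul_of_nonneg_left hlog h.le
      rw [mul_sub, mul_sub, mul_div_cancel₀ _ h.ne', mul_one] at this
      linarith
  simp only [logb, ← mul_div_assoc, ← sum_div]
  refine div_le_div_of_nonneg_right ?_ (log_pos one_lt_two).le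
  calc ∑ t, p t * log (q t) ≤ ∑ t, (p t * log (p t) + (q t - p t)) := sum_le_sum fun t _ => key t
    _ = ∑ t, p t * log (p t) + (∑ t, q t - ∑ t, p t) := by rw [sum_add_distrib, sum_sub_distrib]
    _ ≤ ∑ t, p t * log (p t) := by linarith

theorem sum_pr_pair_mul_div_eq [Fintype α] [Fintype β] [Fintype γ] (μ : Ω → ℝ)
    (X : Ω → α) (Y : Ω → β) (Z : Ω → γ) :
    ∑ t : (α × β) × γ, pr μ (fun ω => (X ω, Z ω)) (t.1.1, t.2)
      * pr μ (fun ω => (Y ω, Z ω)) (t.1.2, t.2) / pr μ Z t.2 = ∑ ω, μ ω := by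
  rw [← sum_pr μ Z, Fintype.sum_prod_type, sum_comm]
  refine sum_congr rfl fun c _ => ?_
  rw [Fintype.sum_prod_type]
  simp only [← sum_div, ← sum_mul, ← mul_sum, sum_pr_pair_fst]
  rcases eq_or_ne (pr μ Z c) 0 with h | h
  · simp [h]
  · field_simp

theorem condMutInf_nonneg [Fintype α] [Fintype β] [Fintype γ] {μ : Ω → ℝ}
    (hμ : ∀ ω, 0 ≤ μ ω) (X : Ω → α) (Y : Ω → β) (Z : Ω → γ) :
    0 ≤ condMutInf μ X Y Z := by
  set T : Ω → (α × β) × γ := fun ω => ((X ω, Y ω), Z ω)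
  set p := pr μ T
  set pXZ := pr μ (fun ω => (X ω, Z ω))
  set pYZ := pr μ (fun ω => (Y ω, Z ω))
  set pZ := pr μ Z
  have hp : ∀ t, 0 ≤ p t := pr_nonneg hμ T
  have hpXZ : ∀ t, p t ≤ pXZ (t.1.1, t.2) := fun t =>
    pr_le_pr_of_imp hμ fun ω h => by rw [← h]
  have hpYZ : ∀ t, p t ≤ pYZ (t.1.2, t.2) := fun t =>
    pr_le_pr_of_imp hμ fun ω h => by rw [← h]
  have hpZ : ∀ t, p t ≤ pZ t.2 := fun t => pr_le_pr_of_imp hμ fun ω h => by rw [← h]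
  have hlog : ∀ t, p t * logb 2 (pXZ (t.1.1, t.2) * pYZ (t.1.2, t.2) / pZ t.2)
      = p t * logb 2 (pXZ (t.1.1, t.2)) + p t * logb 2 (pYZ (t.1.2, t.2))
        - p t * logb 2 (pZ t.2) := by
    intro t
    rcases (hp t).eq_or_lt with h | h
    · simp [← h]
    · have hXZ := h.trans_le (hpXZ t)
      have hYZ := h.trans_le (hpYZ t)
      rw [logb_div (mul_pos hXZ hYZ).ne' (h.trans_le (hpZ t)).ne', logb_mul hXZ.ne' hYZ.ne']
      ring
  have gibbs := sum_mul_logb_le_sum_mul_logb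
    (q := fun t => pXZ (t.1.1, t.2) * pYZ (t.1.2, t.2) / pZ t.2) hp
    (fun t => div_nonneg (mul_nonneg (pr_nonneg hμ _ _) (pr_nonneg hμ _ _)) (pr_nonneg hμ _ _))
    (fun t h => div_pos (mul_pos (h.trans_le (hpXZ t)) (h.trans_le (hpYZ t)))
      (h.trans_le (hpZ t)))
    (by rw [sum_pr_pair_mul_div_eq, sum_pr])
  simp only [hlog, sum_add_distrib, sum_sub_distrib] at gibbs
  have eXZ : ent μ (fun ω => (X ω, Z ω)) = -∑ t, p t * logb 2 (pXZ (t.1.1, t.2)) :=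
    ent_comp_eq_neg_sum μ T fun t => (t.1.1, t.2)
  have eYZ : ent μ (fun ω => (Y ω, Z ω)) = -∑ t, p t * logb 2 (pYZ (t.1.2, t.2)) :=
    ent_comp_eq_neg_sum μ T fun t => (t.1.2, t.2)
  have eZ : ent μ Z = -∑ t, p t * logb 2 (pZ t.2) := ent_comp_eq_neg_sum μ T Prod.snd
  have eT : ent μ T = -∑ t, p t * logb 2 (p t) := rfl
  rw [condMutInf, condEnt, condEnt, condEnt, eXZ, eYZ, eZ]
  linarith

theorem condMutInf_eq_condEnt_sub [Fintype α] [Fintype β] [Fintype γ] {μ : Ω → ℝ}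
    (hμ : ∀ ω, 0 ≤ μ ω) (X : Ω → α) (Y : Ω → β) (Z : Ω → γ) :
    condMutInf μ X Y Z = condEnt μ Y Z - condEnt μ Y (fun ω => (X ω, Z ω)) := by
  have h : ent μ (fun ω => (Y ω, (X ω, Z ω))) = ent μ (fun ω => ((X ω, Y ω), Z ω)) :=
    ent_comp_of_leftInverse hμ (fun ω => ((X ω, Y ω), Z ω)) (fun t => (t.1.2, (t.1.1, t.2)))
      (fun t => ((t.2.1, t.1), t.2.2)) fun _ => rfl
  simp only [condMutInf, condEnt]
  linarith

theorem condEnt_le_condEnt_comp [Fintype α] [Fintype β] [Fintype γ] {μ : Ω → ℝ}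
    (hμ : ∀ ω, 0 ≤ μ ω) (X : Ω → α) (Y : Ω → β) (g : α → γ) :
    condEnt μ Y X ≤ condEnt μ Y (fun ω => g (X ω)) := by
  have h := condMutInf_nonneg hμ X Y fun ω => g (X ω)
  have hYX : ent μ (fun ω => (Y ω, (X ω, g (X ω)))) = ent μ (fun ω => (Y ω, X ω)) :=
    ent_comp_of_leftInverse hμ (fun ω => (Y ω, X ω)) (fun t => (t.1, (t.2, g t.2)))
      (fun t => (t.1, t.2.1)) fun _ => rfl
  have hX : ent μ (fun ω => (X ω, g (X ω))) = ent μ X :=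
    ent_comp_of_leftInverse hμ X (fun a => (a, g a)) Prod.fst fun _ => rfl
  rw [condMutInf_eq_condEnt_sub hμ] at h
  simp only [condEnt] at h ⊢
  linarith

theorem ent_punit {μ : Ω → ℝ} (hμ : IsPMF μ) : ent μ (fun _ => ()) = 0 := by
  simp [ent, pr, hμ.2]

theorem condEnt_le_ent [Fintype α] [Fintype β] {μ : Ω → ℝ} (hμ : IsPMF μ) (X : Ω → α)
    (Y : Ω → β) : condEnt μ Y X ≤ ent μ Y := by
  refine (condEnt_le_condEnt_comp hμ.1 X Y fun _ => ()).trans_eq ?_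
  have hY : ent μ (fun ω => (Y ω, ())) = ent μ Y :=
    ent_comp_of_leftInverse hμ.1 Y (fun b => (b, ())) Prod.fst fun _ => rfl
  rw [condEnt, hY, ent_punit hμ, sub_zero]

theorem condEnt_le_condEnt_add_condEnt [Fintype α] [Fintype β] [Fintype γ]
    {μ : Ω → ℝ} (hμ : ∀ ω, 0 ≤ μ ω) (Z : Ω → α) (M : Ω → β) (C : Ω → γ) :
    condEnt μ Z C ≤ condEnt μ M C + condEnt μ Z (fun ω => (M ω, C ω)) := by
  have h := ent_comp_le hμ (fun ω => (Z ω, (M ω, C ω))) fun t => (t.1, t.2.2)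
  simp only [condEnt]
  linarith

end InformationInequalities

theorem stmt8_general {γ δ ε ζ κ : Type*} [Fintype γ] [DecidableEq γ] [Fintype δ] [DecidableEq δ]
    [Fintype ε] [DecidableEq ε] [Fintype ζ] [DecidableEq ζ] [Fintype κ] [DecidableEq κ]
    (μ : Ω → ℝ) (hμ : IsPMF μ)
    (M : Ω → γ) (C : Ω → δ) (Xn : Ω → ε) (Zn : Ω → ζ) (Un : Ω → κ)
    (n : ℕ) (R0 hZX hZU hZXU : ℝ)
    (hM : ent μ M = n * R0)
    (f : δ × γ → κ) (hU : ∀ ω, Un ω = f (C ω, M ω))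
    (h1 : condEnt μ Zn (fun ω => (Xn ω, C ω)) = n * hZX)
    (h2 : condEnt μ Zn Un ≤ n * hZU)
    (h4 : hZX = hZXU) :
    condMutInf μ Xn Zn C ≤ n * R0 + n * (hZU - hZXU) := by
  have hZC := condEnt_le_condEnt_add_condEnt hμ.1 Zn M C
  have hMC := condEnt_le_ent hμ C M
  have hZMC : condEnt μ Zn (fun ω => (M ω, C ω)) ≤ condEnt μ Zn Un := by
    rw [show Un = fun ω => f (C ω, M ω) from funext hU]
    exact condEnt_le_condEnt_comp hμ.1 (fun ω => (M ω, C ω)) Zn fun t => f (t.2, t.1)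
  rw [condMutInf_eq_condEnt_sub hμ.1, h1, h4]
  linarith

/-- disturbance-rate bound. `M` is uniform on a set of size `2^{nR₀}`
(so `H(M) = nR₀`), `Uⁿ` is a deterministic function of `(𝒞, M)`, the channel is memoryless:
`H(Zⁿ|Xⁿ,𝒞) = nH(Z|X)`, `H(Zⁿ|Uⁿ) ≤ nH(Z|U)`, `H(Zⁿ|Xⁿ,Uⁿ) = nH(Z|X,U)` with
`H(Z|X) = H(Z|X,U)`. Then `I(Xⁿ;Zⁿ|𝒞) ≤ nR₀ + nI(X;Z|U)` where `I(X;Z|U) = H(Z|U) − H(Z|X,U)`. -/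
theorem stmt8 {γ δ ε ζ κ : Type*} [Fintype γ] [DecidableEq γ] [Fintype δ] [DecidableEq δ]
    [Fintype ε] [DecidableEq ε] [Fintype ζ] [DecidableEq ζ] [Fintype κ] [DecidableEq κ]
    (μ : Ω → ℝ) (hμ : IsPMF μ)
    (M : Ω → γ) (C : Ω → δ) (Xn : Ω → ε) (Zn : Ω → ζ) (Un : Ω → κ)
    (n : ℕ) (R0 hZX hZU hZXU : ℝ)
    (hM : ent μ M = n * R0)
    (f : δ × γ → κ) (hU : ∀ ω, Un ω = f (C ω, M ω))
    (h1 : condEnt μ Zn (fun ω => (Xn ω, C ω)) = n * hZX)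
    (h2 : condEnt μ Zn Un ≤ n * hZU)
    (h3 : condEnt μ Zn (fun ω => (Xn ω, Un ω)) = n * hZXU)
    (h4 : hZX = hZXU) :
    condMutInf μ Xn Zn C ≤ n * R0 + n * (hZU - hZXU) :=
  stmt8_general μ hμ M C Xn Zn Un n R0 hZX hZU hZXU hM f hU h1 h2 h4
end
end
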